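/- Let D be an SI-concept in negation normal form and m = |sub(D)|. Then every path in any completion tree generated by the SI tableaux algorithm for D has length at most m⁴. -/

import Mathlib

/-- SHIQ-roles: role names (indexed by ℕ) and their inverses. -/
inductive Role where
  | atom : ℕ → Role
  | inv  : ℕ → Role
deriving DecidableEq

/-- The function `Inv` on roles: `Inv(R) = R⁻`, `Inv(R⁻) = R`. -/
def Role.Inv : Role → Role
  | .atom r => .inv r
  | .inv r  => .atom r

/-- The underlying role name of a (possibly inverse) role. -/
def Role.name : Role → ℕ
  | .atom r => r
  | .inv r  => r

/-- Concepts of the SHIQ family (with ⊤ and ⊥ for convenience). -/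
inductive DLConcept where
  | top : DLConcept
  | bot : DLConcept
  | atom : ℕ → DLConcept
  | neg : DLConcept → DLConcept
  | and : DLConcept → DLConcept → DLConcept
  | or : DLConcept → DLConcept → DLConcept
  | all : Role → DLConcept → DLConcept
  | ex : Role → DLConcept → DLConcept
  | atleast : ℕ → Role → DLConcept → DLConcept
  | atmost : ℕ → Role → DLConcept → DLConcept
deriving DecidableEq

/-- An interpretation: a (nonempty) domain, a valuation of concept names and
    of role names. -/
structure Interp where
  Dom : Type
  dom_nonempty : Nonempty Dom
  cI : ℕ → Set Dom
  rI : ℕ → Dom → Dom → Prop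

/-- Semantics of (possibly inverse) roles. -/
def Interp.rSem (I : Interp) : Role → I.Dom → I.Dom → Prop
  | .atom r => I.rI r
  | .inv r  => fun x y => I.rI r y x

/-- Semantics of concepts; number restrictions are interpreted by counting
    role successors (via cardinalities, so that infinite sets are handled
    correctly). -/
def Interp.cSem (I : Interp) : DLConcept → Set I.Dom
  | .top => Set.univ
  | .bot => ∅
  | .atom a => I.cI a
  | .neg C => (I.cSem C)ᶜ
  | .and C D => I.cSem C ∩ I.cSem D
  | .or C D => I.cSem C ∪ I.cSem D
  | .all R C => {x | ∀ y, I.rSem R x y → y ∈ I.cSem C}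
  | .ex R C => {x | ∃ y, I.rSem R x y ∧ y ∈ I.cSem C}
  | .atleast n R C => {x | (n : Cardinal) ≤ Cardinal.mk {y // I.rSem R x y ∧ y ∈ I.cSem C}}
  | .atmost n R C => {x | Cardinal.mk {y // I.rSem R x y ∧ y ∈ I.cSem C} ≤ (n : Cardinal)}

/-- `I.Good Rp`: the interpretation interprets every transitive role name
    (member of `Rp`) by a transitive relation. -/
def Interp.Good (I : Interp) (Rp : Set ℕ) : Prop :=
  ∀ r ∈ Rp, Transitive (I.rI r)

/-- The role hierarchy ⊑* generated by a finite set of role inclusion axioms: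
    inverses are added and the transitive-reflexive closure is taken. -/
def SubRole (RIA : List (Role × Role)) : Role → Role → Prop :=
  Relation.ReflTransGen (fun R S => (R, S) ∈ RIA ∨ (R.Inv, S.Inv) ∈ RIA)

/-- `I ⊨ R⁺`: the interpretation satisfies the role hierarchy. -/
def Interp.ModelsRH (I : Interp) (RIA : List (Role × Role)) : Prop :=
  ∀ R S, SubRole RIA R S → ∀ x y, I.rSem R x y → I.rSem S x y

/-- `Trans(R)`: a (possibly inverse) role is transitive iff its name is in `Rp`. -/
def RTrans (Rp : Set ℕ) : Role → Prop
  | .atom r => r ∈ Rp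
  | .inv r  => r ∈ Rp

/-- A role is simple iff it is neither transitive nor has a transitive sub-role. -/
def SimpleRole (Rp : Set ℕ) (RIA : List (Role × Role)) (R : Role) : Prop :=
  ∀ S, SubRole RIA S R → ¬ RTrans Rp S

/-- SHIQ-concepts: number restrictions occur only on simple roles. -/
def DLConcept.IsSHIQ (Rp : Set ℕ) (RIA : List (Role × Role)) : DLConcept → Prop
  | .top | .bot | .atom _ => True
  | .neg C => C.IsSHIQ Rp RIA
  | .and C D | .or C D => C.IsSHIQ Rp RIA ∧ D.IsSHIQ Rp RIA
  | .all _ C | .ex _ C => C.IsSHIQ Rp RIA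
  | .atleast _ R C | .atmost _ R C => SimpleRole Rp RIA R ∧ C.IsSHIQ Rp RIA

/-- Satisfiability of a concept w.r.t. a role hierarchy. -/
def Satisfiable (Rp : Set ℕ) (RIA : List (Role × Role)) (C : DLConcept) : Prop :=
  ∃ I : Interp, I.Good Rp ∧ I.ModelsRH RIA ∧ (I.cSem C).Nonempty

/-- Subsumption of concepts w.r.t. a role hierarchy. -/
def Subsumes (Rp : Set ℕ) (RIA : List (Role × Role)) (C D : DLConcept) : Prop :=
  ∀ I : Interp, I.Good Rp → I.ModelsRH RIA → I.cSem C ⊆ I.cSem D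

/-- Negation normal form: negation occurs only in front of concept names. -/
def DLConcept.IsNNF : DLConcept → Prop
  | .neg (.atom _) => True
  | .neg _ => False
  | .top | .bot | .atom _ => True
  | .and C D | .or C D => C.IsNNF ∧ D.IsNNF
  | .all _ C | .ex _ C => C.IsNNF
  | .atleast _ _ C | .atmost _ _ C => C.IsNNF

/-- `~C`: the negation normal form of `¬C` (for `C` in NNF). -/
def DLConcept.nnfNeg : DLConcept → DLConcept
  | .top => .bot
  | .bot => .top
  | .atom a => .neg (.atom a)
  | .neg C => C
  | .and C D => .or C.nnfNeg D.nnfNeg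
  | .or C D => .and C.nnfNeg D.nnfNeg
  | .all R C => .ex R C.nnfNeg
  | .ex R C => .all R C.nnfNeg
  | .atleast 0 _ _ => .bot
  | .atleast (n+1) R C => .atmost n R C
  | .atmost n R C => .atleast (n + 1) R C

/-- Direct (one-step) subconcepts. -/
inductive DirectSub : DLConcept → DLConcept → Prop
  | neg (C : DLConcept) : DirectSub C (.neg C)
  | andl (C D : DLConcept) : DirectSub C (.and C D)
  | andr (C D : DLConcept) : DirectSub D (.and C D)
  | orl (C D : DLConcept) : DirectSub C (.or C D)
  | orr (C D : DLConcept) : DirectSub D (.or C D)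
  | all (R : Role) (C : DLConcept) : DirectSub C (.all R C)
  | ex (R : Role) (C : DLConcept) : DirectSub C (.ex R C)
  | atleast (n : ℕ) (R : Role) (C : DLConcept) : DirectSub C (.atleast n R C)
  | atmost (n : ℕ) (R : Role) (C : DLConcept) : DirectSub C (.atmost n R C)

/-- `clos(D)`: the smallest set of concepts containing `D` that is closed under
subconcepts and under `~`. -/
inductive InClos (D : DLConcept) : DLConcept → Prop
  | base : InClos D D
  | sub {C C' : DLConcept} : InClos D C → DirectSub C' C → InClos D C'
  | nnf {C : DLConcept} : InClos D C → InClos D C.nnfNeg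

/-- The roles occurring in a concept. -/
def DLConcept.rolesOf : DLConcept → Finset Role
  | .top | .bot | .atom _ => ∅
  | .neg C => C.rolesOf
  | .and C D | .or C D => C.rolesOf ∪ D.rolesOf
  | .all R C | .ex R C => insert R C.rolesOf
  | .atleast _ R C | .atmost _ R C => insert R C.rolesOf

/-- `R_D`: the roles occurring in `D` and in the role hierarchy, together with
their inverses. -/
def RD (D : DLConcept) (RIA : List (Role × Role)) : Finset Role :=
  let base := D.rolesOf ∪ RIA.foldr (fun p acc => insert p.1 (insert p.2 acc)) ∅
  base ∪ base.image Role.Inv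

/-- SI-concepts: no number restrictions. -/
def DLConcept.IsSI : DLConcept → Prop
  | .top | .bot | .atom _ => True
  | .neg C => C.IsSI
  | .and C D | .or C D => C.IsSI ∧ D.IsSI
  | .all _ C | .ex _ C => C.IsSI
  | .atleast _ _ _ | .atmost _ _ _ => False

/-- Satisfiability of an SI-concept (no role hierarchy). -/
def SatisfiableSI (Rp : Set ℕ) (C : DLConcept) : Prop :=
  ∃ I : Interp, I.Good Rp ∧ (I.cSem C).Nonempty

/-- Subsumption of SI-concepts (no role hierarchy). -/
def SubsumesSI (Rp : Set ℕ) (C D : DLConcept) : Prop :=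
  ∀ I : Interp, I.Good Rp → I.cSem C ⊆ I.cSem D

/-- A completion tree for the SI algorithm: each node `x` carries two labels
`B(x) ⊆ L(x) ⊆ sub(D)`, and each edge (stored at the child) carries a single
(possibly inverse) role. -/
structure SITree where
  nodes : Finset ℕ
  root : ℕ
  parent : ℕ → ℕ
  lab : ℕ → Finset DLConcept
  blab : ℕ → Finset DLConcept
  elb : ℕ → Role
  root_mem : root ∈ nodes
  parent_mem : ∀ x ∈ nodes, x ≠ root → parent x ∈ nodes
  reach : ∀ x ∈ nodes, ∃ k, parent^[k] x = root
  blab_sub : ∀ x, blab x ⊆ lab x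

namespace SITree

/-- `y` is a successor of `x`. -/
def Succ (t : SITree) (x y : ℕ) : Prop :=
  y ∈ t.nodes ∧ y ≠ t.root ∧ t.parent y = x

/-- `y` is an `S`-successor of `x`. -/
def SSucc (t : SITree) (S : Role) (x y : ℕ) : Prop :=
  t.Succ x y ∧ t.elb y = S

/-- `y` is an `S`-predecessor of `x` (i.e. `x` is an `Inv(S)`-successor of `y`). -/
def SPred (t : SITree) (S : Role) (x y : ℕ) : Prop :=
  t.SSucc S.Inv y x

/-- `y` is an `S`-neighbour of `x`. -/
def SNeighb (t : SITree) (S : Role) (x y : ℕ) : Prop :=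
  t.SSucc S x y ∨ t.SPred S x y

/-- `x` is a (proper) ancestor of `y`. -/
def Anc (t : SITree) (x y : ℕ) : Prop :=
  y ∈ t.nodes ∧ ∃ k, 0 < k ∧ t.parent^[k] y = x ∧ ∀ j < k, t.parent^[j] y ≠ t.root

/-- The depth of a node (the length of the path from the root to it). -/
noncomputable def depth (t : SITree) (x : ℕ) : ℕ :=
  sInf {k | t.parent^[k] x = t.root}

/-- `L(x)/Inv(S) = { ∀Inv(S).C ∈ L(x) }` (as a set of concepts). -/
def restrInv (t : SITree) (S : Role) (x : ℕ) : Set DLConcept :=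
  {C | C ∈ t.lab x ∧ ∃ C', C = DLConcept.all S.Inv C'}

/-- The SI blocking-witness condition for a node `z` with predecessor `z'` and
incoming edge label `S`: `z` has an ancestor `y` with `B(z) ⊆ L(y)` and
`L(z)/Inv(S) = L(y)/Inv(S)`. -/
def BCand (t : SITree) (z : ℕ) : Prop :=
  z ∈ t.nodes ∧ z ≠ t.root ∧
  ∃ y, t.Anc y z ∧ (↑(t.blab z) : Set DLConcept) ⊆ ↑(t.lab y) ∧
    {C | C ∈ t.lab z ∧ ∃ C', C = DLConcept.all (t.elb z).Inv C'} =
    {C | C ∈ t.lab y ∧ ∃ C', C = DLConcept.all (t.elb z).Inv C'}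

/-- `x` is blocked: `x` itself or one of its ancestors satisfies the SI
blocking-witness condition. -/
def Blocked (t : SITree) (x : ℕ) : Prop :=
  ∃ z, (z = x ∨ t.Anc z x) ∧ t.BCand z

/-- The ⊓-rule is applicable to node `z`. -/
def ConjApp (t : SITree) (z : ℕ) : Prop :=
  ∃ C₁ C₂, DLConcept.and C₁ C₂ ∈ t.lab z ∧ ¬ ({C₁, C₂} ⊆ t.lab z)

/-- The ⊔-rule is applicable to node `z`. -/
def DisjApp (t : SITree) (z : ℕ) : Prop :=
  ∃ C₁ C₂, DLConcept.or C₁ C₂ ∈ t.lab z ∧ C₁ ∉ t.lab z ∧ C₂ ∉ t.lab z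

/-- The ∀-rule is applicable to node `z`. -/
def AllApp (t : SITree) (z : ℕ) : Prop :=
  ∃ S C, DLConcept.all S C ∈ t.lab z ∧
    ((∃ y, t.SSucc S z y ∧ C ∉ t.blab y) ∨ (∃ y, t.SPred S z y ∧ C ∉ t.lab y))

/-- The ∀₊-rule is applicable to node `z`. -/
def AllTransApp (Rp : Set ℕ) (t : SITree) (z : ℕ) : Prop :=
  ∃ S C, DLConcept.all S C ∈ t.lab z ∧ RTrans Rp S ∧
    ((∃ y, t.SSucc S z y ∧ DLConcept.all S C ∉ t.blab y) ∨
     (∃ y, t.SPred S z y ∧ DLConcept.all S C ∉ t.lab y))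

end SITree

/-- The expansion rules of the SI tableaux algorithm, as a one-step transition
relation between SI completion trees. -/
inductive SIStep (Rp : Set ℕ) : SITree → SITree → Prop
  | conj (t t' : SITree) (x : ℕ) (C₁ C₂ : DLConcept)
      (hx : x ∈ t.nodes) (hC : DLConcept.and C₁ C₂ ∈ t.lab x)
      (hnew : ¬ ({C₁, C₂} ⊆ t.lab x))
      (hn : t'.nodes = t.nodes) (hr : t'.root = t.root) (hp : t'.parent = t.parent)
      (hl : t'.lab = Function.update t.lab x (t.lab x ∪ {C₁, C₂}))
      (hb : t'.blab = t.blab) (he : t'.elb = t.elb) :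
      SIStep Rp t t'
  | disj (t t' : SITree) (x : ℕ) (C₁ C₂ E : DLConcept)
      (hx : x ∈ t.nodes) (hC : DLConcept.or C₁ C₂ ∈ t.lab x)
      (hnew : C₁ ∉ t.lab x ∧ C₂ ∉ t.lab x) (hE : E = C₁ ∨ E = C₂)
      (hn : t'.nodes = t.nodes) (hr : t'.root = t.root) (hp : t'.parent = t.parent)
      (hl : t'.lab = Function.update t.lab x (insert E (t.lab x)))
      (hb : t'.blab = t.blab) (he : t'.elb = t.elb) :
      SIStep Rp t t'
  | allSucc (t t' : SITree) (x y : ℕ) (S : Role) (C : DLConcept)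
      (hx : x ∈ t.nodes) (hC : DLConcept.all S C ∈ t.lab x)
      (hy : t.SSucc S x y) (hnew : C ∉ t.blab y)
      (hn : t'.nodes = t.nodes) (hr : t'.root = t.root) (hp : t'.parent = t.parent)
      (hl : t'.lab = Function.update t.lab y (insert C (t.lab y)))
      (hb : t'.blab = Function.update t.blab y (insert C (t.blab y)))
      (he : t'.elb = t.elb) :
      SIStep Rp t t'
  | allPred (t t' : SITree) (x y : ℕ) (S : Role) (C : DLConcept)
      (hx : x ∈ t.nodes) (hC : DLConcept.all S C ∈ t.lab x)
      (hy : t.SPred S x y) (hnew : C ∉ t.lab y)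
      (hn : t'.nodes = t.nodes) (hr : t'.root = t.root) (hp : t'.parent = t.parent)
      (hl : t'.lab = Function.update t.lab y (insert C (t.lab y)))
      (hb : t'.blab = t.blab) (he : t'.elb = t.elb) :
      SIStep Rp t t'
  | allTransSucc (t t' : SITree) (x y : ℕ) (S : Role) (C : DLConcept)
      (hx : x ∈ t.nodes) (hC : DLConcept.all S C ∈ t.lab x) (htr : RTrans Rp S)
      (hy : t.SSucc S x y) (hnew : DLConcept.all S C ∉ t.blab y)
      (hn : t'.nodes = t.nodes) (hr : t'.root = t.root) (hp : t'.parent = t.parent)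
      (hl : t'.lab = Function.update t.lab y (insert (DLConcept.all S C) (t.lab y)))
      (hb : t'.blab = Function.update t.blab y (insert (DLConcept.all S C) (t.blab y)))
      (he : t'.elb = t.elb) :
      SIStep Rp t t'
  | allTransPred (t t' : SITree) (x y : ℕ) (S : Role) (C : DLConcept)
      (hx : x ∈ t.nodes) (hC : DLConcept.all S C ∈ t.lab x) (htr : RTrans Rp S)
      (hy : t.SPred S x y) (hnew : DLConcept.all S C ∉ t.lab y)
      (hn : t'.nodes = t.nodes) (hr : t'.root = t.root) (hp : t'.parent = t.parent)
      (hl : t'.lab = Function.update t.lab y (insert (DLConcept.all S C) (t.lab y)))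
      (hb : t'.blab = t.blab) (he : t'.elb = t.elb) :
      SIStep Rp t t'
  | exists_ (t t' : SITree) (x y : ℕ) (S : Role) (C : DLConcept)
      (hx : x ∈ t.nodes) (hC : DLConcept.ex S C ∈ t.lab x)
      (hnb : ¬ t.Blocked x)
      (hanc : ∀ z, t.Anc z x →
        ¬ (t.ConjApp z ∨ t.DisjApp z ∨ t.AllApp z ∨ t.AllTransApp Rp z))
      (hnew : ¬ ∃ z, t.SNeighb S x z ∧ C ∈ t.lab z)
      (hy : y ∉ t.nodes)
      (hn : t'.nodes = insert y t.nodes) (hr : t'.root = t.root)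
      (hp : t'.parent = Function.update t.parent y x)
      (hl : t'.lab = Function.update t.lab y {C})
      (hb : t'.blab = Function.update t.blab y {C})
      (he : t'.elb = Function.update t.elb y S) :
      SIStep Rp t t'

/-- The initial SI completion tree: a single root node with `B = L = {D}`. -/
def initSITree (D : DLConcept) : SITree where
  nodes := {0}
  root := 0
  parent := id
  lab := fun x => if x = 0 then {D} else ∅
  blab := fun x => if x = 0 then {D} else ∅
  elb := fun _ => Role.atom 0
  root_mem := by simp
  parent_mem := by intro x hx hne; simp at hx; exact absurd hx hne
  reach := by intro x hx; simp at hx; exact ⟨0, by simpa using hx⟩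
  blab_sub := by intro x; exact Finset.Subset.refl _

/-!
Every concept of a label can be traced back, rule by rule, to `D` in the label of the root.
Take a node `x` at which the `∃`-rule fires, and follow that trace for a concept `∃S.C ∈ L(x)`:
it is a walk from the root that crosses every edge of the path to `x`, and we tag each edge with
the concept carried when the walk first crosses it. Concepts never grow along the walk, and they
shrink after an edge unless the `∀₊`-rule carried the same `∀R.E` across an `R`-edge with `R`
transitive. Hence at most `m` tags are strict, and the others form at most `m` runs of
consecutive `R`-edges carrying one `∀R.E`. Since all ancestors of `x` are saturated, along such
a run `L/R` grows and `L/R⁻` shrinks, so two edges of a run with the same creating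
`∃R`-concept and the same sizes of these two parts would block `x`. By AM-GM a run has at most
`(m + 2)³/27 + 1` edges, and the depth of `x` is below `m⁴`.
-/

theorem Role.Inv_Inv (R : Role) : R.Inv.Inv = R := by cases R <;> rfl

theorem Role.Inv_ne (R : Role) : R.Inv ≠ R := by cases R <;> simp [Role.Inv]

theorem RTrans.inv {Rp : Set ℕ} {R : Role} (h : RTrans Rp R) : RTrans Rp R.Inv := by
  cases R <;> exact h

namespace DLConcept

def size : DLConcept → ℕ
  | top | bot | atom _ => 1
  | neg C | all _ C | ex _ C | atleast _ _ C | atmost _ _ C => C.size + 1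
  | and C D | or C D => C.size + D.size + 1

theorem size_lt_of_directSub {C D : DLConcept} (h : DirectSub C D) : C.size < D.size := by
  cases h <;> simp only [size] <;> omega

def subs (C : DLConcept) : Finset DLConcept :=
  insert C <| match C with
    | top | bot | atom _ => ∅
    | neg C | all _ C | ex _ C | atleast _ _ C | atmost _ _ C => C.subs
    | and C D | or C D => C.subs ∪ D.subs

theorem self_mem_subs (C : DLConcept) : C ∈ C.subs := by
  unfold subs; exact Finset.mem_insert_self _ _

theorem subs_subset_of_directSub {C D : DLConcept} (h : DirectSub C D) : C.subs ⊆ D.subs := by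
  cases h <;> intro F hF <;> simp [subs, hF]

theorem mem_subs_iff {C D : DLConcept} : C ∈ D.subs ↔ Relation.ReflTransGen DirectSub C D := by
  constructor
  · intro h
    induction D with
    | top | bot | atom _ => simp [subs] at h; exact h ▸ .refl
    | neg D ih | all _ D ih | ex _ D ih | atleast _ _ D ih | atmost _ _ D ih =>
      rcases Finset.mem_insert.1 h with rfl | h
      · exact .refl
      · exact (ih h).tail (by constructor)
    | and D₁ D₂ ih₁ ih₂ | or D₁ D₂ ih₁ ih₂ =>
      rcases Finset.mem_insert.1 h with rfl | h
      · exact .refl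
      rcases Finset.mem_union.1 h with h | h
      · exact (ih₁ h).tail (by constructor)
      · exact (ih₂ h).tail (by constructor)
  · intro h
    induction h with
    | refl => exact self_mem_subs C
    | tail _ hstep ih => exact subs_subset_of_directSub hstep ih

theorem mem_subs_of_directSub {C C' D : DLConcept} (hC : C ∈ D.subs) (h : DirectSub C' C) :
    C' ∈ D.subs :=
  mem_subs_iff.2 ((mem_subs_iff.1 hC).head h)

theorem ncard_setOf_reflTransGen (D : DLConcept) :
    {C | Relation.ReflTransGen DirectSub C D}.ncard = D.subs.card := by
  rw [← Set.ncard_coe_finset]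
  congr 1
  ext C
  exact mem_subs_iff.symm

theorem two_le_card_subs {D C : DLConcept} {S : Role} (h : ex S C ∈ D.subs) :
    2 ≤ D.subs.card := by
  have hne : C ≠ ex S C := fun hC => (size_lt_of_directSub (.ex S C)).ne (congrArg size hC)
  rw [← Finset.card_pair hne]
  exact Finset.card_le_card (Finset.insert_subset (mem_subs_of_directSub h (.ex S C))
    (Finset.singleton_subset_iff.2 h))

open Classical in
/-- The paper's `L/R` is `ofForm (.all R) L`. -/
noncomputable def ofForm (f : DLConcept → DLConcept) (L : Finset DLConcept) : Finset DLConcept :=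
  L.filter (· ∈ Set.range f)

theorem mem_ofForm {f : DLConcept → DLConcept} {L : Finset DLConcept} {F : DLConcept} :
    F ∈ ofForm f L ↔ F ∈ L ∧ ∃ E, f E = F := by
  simp [ofForm]

theorem ofForm_subset (f : DLConcept → DLConcept) (L : Finset DLConcept) : ofForm f L ⊆ L :=
  fun _ hF => (mem_ofForm.1 hF).1

theorem ofForm_subset_ofForm {f : DLConcept → DLConcept} {L L' : Finset DLConcept}
    (h : L ⊆ L') : ofForm f L ⊆ ofForm f L' :=
  fun _ hF => mem_ofForm.2 ⟨h (ofForm_subset f L hF), (mem_ofForm.1 hF).2⟩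

theorem card_ofForm_ex_add_all_add_all_inv_le (R : Role) (L : Finset DLConcept) :
    (ofForm (ex R) L).card + (ofForm (all R) L).card + (ofForm (all R.Inv) L).card ≤ L.card := by
  have hdisj₁ : Disjoint (ofForm (ex R) L) (ofForm (all R) L) := by
    refine Finset.disjoint_left.2 fun F hF hF' => ?_
    obtain ⟨-, E, rfl⟩ := mem_ofForm.1 hF
    obtain ⟨-, E', h⟩ := mem_ofForm.1 hF'
    cases h
  have hdisj₂ : Disjoint (ofForm (ex R) L ∪ ofForm (all R) L) (ofForm (all R.Inv) L) := by
    refine Finset.disjoint_left.2 fun F hF hF' => ?_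
    obtain ⟨-, E, rfl⟩ := mem_ofForm.1 hF'
    rcases Finset.mem_union.1 hF with hF | hF <;> obtain ⟨-, E', h⟩ := mem_ofForm.1 hF
    · cases h
    · injection h with h; exact R.Inv_ne h.symm
  rw [← Finset.card_union_of_disjoint hdisj₁, ← Finset.card_union_of_disjoint hdisj₂]
  exact Finset.card_le_card (Finset.union_subset (Finset.union_subset (ofForm_subset _ _)
    (ofForm_subset _ _)) (ofForm_subset _ _))

end DLConcept

theorem mul_mul_le_add_add_pow_three (x y z : ℕ) : 27 * (x * y * z) ≤ (x + y + z) ^ 3 := by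
  have hx : (0 : ℤ) ≤ x := by positivity
  have hy : (0 : ℤ) ≤ y := by positivity
  have hz : (0 : ℤ) ≤ z := by positivity
  have : 27 * ((x : ℤ) * y * z) ≤ ((x : ℤ) + y + z) ^ 3 := by
    nlinarith [mul_nonneg hx (sq_nonneg ((y : ℤ) - z)), mul_nonneg hy (sq_nonneg ((x : ℤ) - z)),
      mul_nonneg hz (sq_nonneg ((x : ℤ) - y)), mul_nonneg (add_nonneg (add_nonneg hx hy) hz)
        (add_nonneg (add_nonneg (sq_nonneg ((x : ℤ) - y)) (sq_nonneg ((y : ℤ) - z)))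
          (sq_nonneg ((x : ℤ) - z)))]
  exact_mod_cast this

theorem succ_le_pow_four {m n : ℕ} (hm : 2 ≤ m)
    (h : 27 * n ≤ 27 * m + m * ((m + 2) ^ 3 + 27)) : n + 1 ≤ m ^ 4 := by
  have hm' : (2 : ℤ) ≤ m := by exact_mod_cast hm
  have : 27 * ((n : ℤ) + 1) ≤ 27 * (m : ℤ) ^ 4 := by
    have h' : 27 * (n : ℤ) ≤ 27 * m + m * ((m + 2) ^ 3 + 27) := by exact_mod_cast h
    nlinarith [mul_le_mul_of_nonneg_left hm' (by positivity : (0 : ℤ) ≤ (m : ℤ) ^ 2),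
      mul_le_mul_of_nonneg_left hm' (by positivity : (0 : ℤ) ≤ (m : ℤ) ^ 3),
      mul_le_mul_of_nonneg_left hm' (by positivity : (0 : ℤ) ≤ (m : ℤ)),
      sq_nonneg ((m : ℤ) - 2)]
  exact_mod_cast (Int.le_of_mul_le_mul_left this (by norm_num))

theorem Finset.subset_update_apply {ι α : Type*} [DecidableEq ι] {f : ι → Finset α} {y : ι}
    {s : Finset α} (hs : f y ⊆ s) (u : ι) : f u ⊆ Function.update f y s u := by
  rcases eq_or_ne u y with rfl | hu
  · simpa using hs
  · simp [hu]

theorem Finset.mem_of_mem_update_apply {ι α : Type*} [DecidableEq ι] {f : ι → Finset α}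
    {y u : ι} {s : Finset α} {a : α} (h : a ∈ Function.update f y s u) (ha : a ∉ f u) :
    u = y ∧ a ∈ s := by
  rcases eq_or_ne u y with rfl | hu
  · simpa using h
  · simp [hu, ha] at h

theorem Finset.eq_of_mem_update_insert {ι α : Type*} [DecidableEq ι] [DecidableEq α]
    {f : ι → Finset α} {y u : ι} {a b : α}
    (h : a ∈ Function.update f y (insert b (f y)) u) (ha : a ∉ f u) : u = y ∧ a = b := by
  obtain ⟨rfl, h⟩ := mem_of_mem_update_apply h ha
  exact ⟨rfl, (mem_insert.1 h).resolve_right ha⟩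

section Descending

variable {α : Type*} {size : α → ℕ} {flow : ℕ → Prop} {c : ℕ → α} {n : ℕ}

def IsDescending (size : α → ℕ) (flow : ℕ → Prop) (c : ℕ → α) (n : ℕ) : Prop :=
  ∀ k k', k < k' → k' < n → size (c k') < size (c k) ∨ (c k' = c k ∧ flow k)

theorem IsDescending.mono {j : ℕ} (h : IsDescending size flow c j) (hn : n ≤ j) :
    IsDescending size flow c n :=
  fun k k' hk hk' => h k k' hk (by omega)

theorem IsDescending.injOn_size (h : IsDescending size flow c n) :
    Set.InjOn (fun k => size (c k)) {k | k < n ∧ ¬ flow k} := by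
  intro k hk k' hk' hkk'
  by_contra hne
  rcases Nat.lt_or_gt_of_ne hne with hlt | hlt
  · exact ((h k k' hlt hk'.1).resolve_right fun h' => hk.2 h'.2).ne' hkk'
  · exact ((h k' k hlt hk.1).resolve_right fun h' => hk'.2 h'.2).ne hkk'

theorem IsDescending.ordConnected_flow (h : IsDescending size flow c n) (a : α) :
    {k | k < n ∧ flow k ∧ c k = a}.OrdConnected := by
  refine ⟨fun k ⟨hkn, hkf, hka⟩ k' ⟨hk'n, hk'f, hk'a⟩ i hi => ?_⟩
  rcases hi.2.eq_or_lt with rfl | hik'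
  · exact ⟨hk'n, hk'f, hk'a⟩
  rcases h i k' hik' hk'n with hlt | ⟨hc, hf⟩
  · rw [hk'a] at hlt
    rcases hi.1.eq_or_lt with rfl | hki
    · rw [hka] at hlt; omega
    rcases h k i hki (by omega) with hlt' | ⟨hc', -⟩
    · rw [hka] at hlt'; omega
    · rw [hc', hka] at hlt; omega
  · exact ⟨by omega, hf, hc ▸ hk'a⟩

theorem IsDescending.mul_le (h : IsDescending size flow c n) {S : Finset α}
    (hS : ∀ k < n, c k ∈ S) {d B : ℕ}
    (hrun : ∀ a ∈ S, ∀ K : Finset ℕ, (K : Set ℕ).OrdConnected →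
      (∀ k ∈ K, k < n ∧ flow k ∧ c k = a) → d * K.card ≤ B) :
    d * n ≤ d * S.card + S.card * B := by
  classical
  set flows := (Finset.range n).filter flow
  set others := (Finset.range n).filter (¬ flow ·)
  have hsplit : flows.card + others.card = n := by
    rw [Finset.card_filter_add_card_filter_not, Finset.card_range]
  have hothers : others.card ≤ S.card := by
    refine (Finset.card_le_card_of_injOn (fun k => size (c k)) (t := S.image size) (fun k hk => ?_)
      (h.injOn_size.mono fun k hk => ?_)).trans Finset.card_image_le <;>
    simp only [others, Finset.coe_filter, Finset.mem_range, Set.mem_ofPred_eq] at hk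
    · exact Finset.mem_image_of_mem size (hS k hk.1)
    · exact hk
  have hfiber : ∀ a ∈ S, d * (flows.filter (c · = a)).card ≤ B := fun a ha =>
    hrun a ha _ (by simpa [flows, and_assoc] using h.ordConnected_flow a) fun k hk => by
      simpa [flows, and_assoc] using hk
  have hflows : d * flows.card ≤ S.card * B := by
    rw [Finset.card_eq_sum_card_fiberwise (fun k hk => hS k (Finset.mem_range.1
      (Finset.mem_filter.1 hk).1)), Finset.mul_sum]
    exact (Finset.sum_le_sum hfiber).trans (by rw [Finset.sum_const, smul_eq_mul])
  nlinarith

end Descending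

namespace SITree

variable {Rp : Set ℕ} {D : DLConcept} {t t' : SITree} {u v x y z j N : ℕ} {R S : Role}
  {C F F' : DLConcept} {c : ℕ → DLConcept} {K : Finset ℕ}

open DLConcept

def AncOrSelf (t : SITree) (u v : ℕ) : Prop := ∃ j, t.parent^[j] v = u

theorem AncOrSelf.of_parent (h : t.AncOrSelf u (t.parent v)) : t.AncOrSelf u v := by
  obtain ⟨j, hj⟩ := h
  exact ⟨j + 1, hj⟩

theorem AncOrSelf.eq_or_of_parent (h : t.AncOrSelf u v) : u = v ∨ t.AncOrSelf u (t.parent v) := by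
  obtain ⟨_ | j, hj⟩ := h
  · exact .inl hj.symm
  · exact .inr ⟨j, hj⟩

theorem AncOrSelf.eq_root (hr : t.parent t.root = t.root) (h : t.AncOrSelf u t.root) :
    u = t.root := by
  obtain ⟨j, hj⟩ := h
  rw [← hj, Function.iterate_fixed hr]

theorem iterate_depth (hx : x ∈ t.nodes) : t.parent^[t.depth x] x = t.root :=
  Nat.sInf_mem (t.reach x hx)

theorem iterate_ne_root {k : ℕ} (hk : k < t.depth x) : t.parent^[k] x ≠ t.root :=
  Nat.notMem_of_lt_sInf (s := {k | t.parent^[k] x = t.root}) hk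

theorem depth_congr (hp : t'.parent = t.parent) (hr : t'.root = t.root) (z : ℕ) :
    t'.depth z = t.depth z := by
  unfold depth; rw [hp, hr]

theorem depth_le_of_iterate_eq (hr : t'.root = t.root) (hz : z ∈ t.nodes)
    (h : t'.parent^[t.depth z] z = t.parent^[t.depth z] z) : t'.depth z ≤ t.depth z :=
  Nat.sInf_le (show _ = _ by rw [h, hr, iterate_depth hz])

theorem mapsTo_parent (hr : t.parent t.root = t.root) : Set.MapsTo t.parent t.nodes t.nodes := by
  intro w hw
  by_cases hwr : w = t.root
  · rw [hwr, hr]; exact t.root_mem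
  · exact t.parent_mem w hw hwr

/-- The node at depth `k` on the path from the root to `x`. -/
noncomputable def pathNode (t : SITree) (x k : ℕ) : ℕ := t.parent^[t.depth x - k] x

@[simp] theorem pathNode_depth (t : SITree) (x : ℕ) : t.pathNode x (t.depth x) = x := by
  simp [pathNode]

theorem pathNode_zero (hx : x ∈ t.nodes) : t.pathNode x 0 = t.root := by
  simp [pathNode, iterate_depth hx]

theorem iterate_pathNode {k a : ℕ} (hk : k ≤ t.depth x) (ha : a ≤ k) :
    t.parent^[a] (t.pathNode x k) = t.pathNode x (k - a) := by
  rw [pathNode, pathNode, ← Function.iterate_add_apply]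
  congr 1; omega

theorem parent_pathNode {k : ℕ} (hk : k < t.depth x) :
    t.parent (t.pathNode x (k + 1)) = t.pathNode x k :=
  iterate_pathNode (a := 1) hk (by omega)

theorem pathNode_ne_root {k : ℕ} (h0 : 0 < k) (hk : k ≤ t.depth x) :
    t.pathNode x k ≠ t.root :=
  iterate_ne_root (by omega)

theorem pathNode_mem (hx : x ∈ t.nodes) {k : ℕ} (hk : k ≤ t.depth x) :
    t.pathNode x k ∈ t.nodes := by
  suffices ∀ j ≤ t.depth x, t.parent^[j] x ∈ t.nodes from this _ (by omega)
  intro j hj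
  induction j with
  | zero => exact hx
  | succ j ih =>
    rw [Function.iterate_succ_apply']
    exact t.parent_mem _ (ih (by omega)) (iterate_ne_root (by omega))

theorem pathNode_inj (hx : x ∈ t.nodes) {k k' : ℕ} (hk : k ≤ t.depth x)
    (hk' : k' ≤ t.depth x) (h : t.pathNode x k = t.pathNode x k') : k = k' := by
  have root_of {i i'} (hi : i ≤ t.depth x) (hi' : i' ≤ t.depth x) (hlt : i < i')
      (h : t.pathNode x i = t.pathNode x i') : False := by
    have h0 : t.pathNode x (i' - i) = t.pathNode x 0 := by
      rw [← iterate_pathNode hi' hlt.le, ← h, iterate_pathNode hi le_rfl, Nat.sub_self]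
    rw [pathNode_zero hx] at h0
    exact pathNode_ne_root (by omega) (by omega) h0
  rcases lt_trichotomy k k' with hlt | heq | hlt
  · exact (root_of hk hk' hlt h).elim
  · exact heq
  · exact (root_of hk' hk hlt h.symm).elim

theorem ancOrSelf_pathNode {j i : ℕ} (hji : j ≤ i) (hi : i ≤ t.depth x) :
    t.AncOrSelf (t.pathNode x j) (t.pathNode x i) :=
  ⟨i - j, by rw [iterate_pathNode hi (by omega)]; congr 1; omega⟩

theorem anc_pathNode (hx : x ∈ t.nodes) {j i : ℕ} (hji : j < i) (hi : i ≤ t.depth x) :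
    t.Anc (t.pathNode x j) (t.pathNode x i) := by
  refine ⟨pathNode_mem hx hi, i - j, by omega, ?_, fun a ha => ?_⟩
  · rw [iterate_pathNode hi (by omega)]; congr 1; omega
  · rw [iterate_pathNode hi (by omega)]
    exact pathNode_ne_root (by omega) (by omega)

theorem anc_of_lt_depth (hx : x ∈ t.nodes) {k : ℕ} (hk : k < t.depth x) :
    t.Anc (t.pathNode x k) x := by
  simpa using anc_pathNode hx hk le_rfl

theorem sSucc_pathNode (hx : x ∈ t.nodes) {k : ℕ} (hk : k < t.depth x) :
    t.SSucc (t.elb (t.pathNode x (k + 1))) (t.pathNode x k) (t.pathNode x (k + 1)) :=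
  ⟨⟨pathNode_mem hx hk, pathNode_ne_root (by omega) hk, parent_pathNode hk⟩, rfl⟩

theorem sPred_pathNode (hx : x ∈ t.nodes) {k : ℕ} (hk : k < t.depth x) :
    t.SPred (t.elb (t.pathNode x (k + 1))).Inv (t.pathNode x (k + 1)) (t.pathNode x k) := by
  rw [SPred, Role.Inv_Inv]; exact sSucc_pathNode hx hk

/-- The `∀₊`-rule carries such an `F` across the edge into `y` unchanged. -/
def TransAllInto (Rp : Set ℕ) (t : SITree) (y : ℕ) (F : DLConcept) : Prop :=
  RTrans Rp (t.elb y) ∧ ∃ E, F = .all (t.elb y) E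

def PushedDown (Rp : Set ℕ) (t : SITree) (y : ℕ) (F : DLConcept) : Prop :=
  .all (t.elb y) F ∈ t.lab (t.parent y) ∨ (t.TransAllInto Rp y F ∧ F ∈ t.lab (t.parent y))

/-- `C` is the concept for which the `∃`-rule created `y`. -/
def BLabelOrigin (Rp : Set ℕ) (t : SITree) (y : ℕ) (C : DLConcept) : Prop :=
  C ∈ t.blab y ∧ .ex (t.elb y) C ∈ t.lab (t.parent y) ∧
    ∀ F ∈ t.blab y, F = C ∨ t.PushedDown Rp y F

def AncestorsSaturated (Rp : Set ℕ) (t : SITree) (x : ℕ) : Prop :=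
  ∀ z, t.Anc z x → ¬ (t.ConjApp z ∨ t.DisjApp z ∨ t.AllApp z ∨ t.AllTransApp Rp z)

/-- `F ∈ L(u)` can be traced back to `D ∈ L(root)` through the expansion rules. -/
inductive Justified (Rp : Set ℕ) (D : DLConcept) (t : SITree) : ℕ → DLConcept → Prop
  | root : Justified Rp D t t.root D
  | andl {u : ℕ} {C₁ C₂ : DLConcept} :
      Justified Rp D t u (.and C₁ C₂) → Justified Rp D t u C₁
  | andr {u : ℕ} {C₁ C₂ : DLConcept} :
      Justified Rp D t u (.and C₁ C₂) → Justified Rp D t u C₂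
  | orl {u : ℕ} {C₁ C₂ : DLConcept} :
      Justified Rp D t u (.or C₁ C₂) → Justified Rp D t u C₁
  | orr {u : ℕ} {C₁ C₂ : DLConcept} :
      Justified Rp D t u (.or C₁ C₂) → Justified Rp D t u C₂
  | created {y : ℕ} {C : DLConcept} : y ∈ t.nodes → y ≠ t.root →
      Justified Rp D t (t.parent y) (.ex (t.elb y) C) → Justified Rp D t y C
  | allDown {y : ℕ} {F : DLConcept} : y ∈ t.nodes → y ≠ t.root →
      Justified Rp D t (t.parent y) (.all (t.elb y) F) → Justified Rp D t y F
  | allUp {y : ℕ} {S : Role} {F : DLConcept} :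
      y ∈ t.nodes → y ≠ t.root → t.elb y = S.Inv →
      Justified Rp D t y (.all S F) → Justified Rp D t (t.parent y) F
  | transDown {y : ℕ} {F : DLConcept} :
      y ∈ t.nodes → y ≠ t.root → t.TransAllInto Rp y F →
      Justified Rp D t (t.parent y) F → Justified Rp D t y F
  | transUp {y : ℕ} {S : Role} {F : DLConcept} :
      y ∈ t.nodes → y ≠ t.root → t.elb y = S.Inv → RTrans Rp S →
      Justified Rp D t y (.all S F) → Justified Rp D t (t.parent y) (.all S F)

theorem Justified.mem_subs (h : t.Justified Rp D u F) : F ∈ D.subs := by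
  induction h with
  | root => exact D.self_mem_subs
  | andl _ ih | andr _ ih | orl _ ih | orr _ ih | created _ _ _ ih | allDown _ _ _ ih
  | allUp _ _ _ _ ih => exact DLConcept.mem_subs_of_directSub ih (by constructor)
  | transDown _ _ _ _ ih | transUp _ _ _ _ _ ih => exact ih

theorem Justified.mono (hn : t.nodes ⊆ t'.nodes) (hr : t'.root = t.root)
    (hp : ∀ w ∈ t.nodes, t'.parent w = t.parent w) (he : ∀ w ∈ t.nodes, t'.elb w = t.elb w)
    (h : t.Justified Rp D u F) : t'.Justified Rp D u F := by
  induction h with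
  | root => exact hr ▸ .root
  | andl _ ih => exact .andl ih
  | andr _ ih => exact .andr ih
  | orl _ ih => exact .orl ih
  | orr _ ih => exact .orr ih
  | created hy hyr _ ih =>
    exact .created (hn hy) (hr ▸ hyr) (by rwa [hp _ hy, he _ hy])
  | allDown hy hyr _ ih =>
    exact .allDown (hn hy) (hr ▸ hyr) (by rwa [hp _ hy, he _ hy])
  | allUp hy hyr hS _ ih =>
    exact hp _ hy ▸ .allUp (hn hy) (hr ▸ hyr) (he _ hy ▸ hS) ih
  | transDown hy hyr hF _ ih =>
    exact .transDown (hn hy) (hr ▸ hyr) (by rwa [TransAllInto, he _ hy]) (hp _ hy ▸ ih)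
  | transUp hy hyr hS hR _ ih =>
    exact hp _ hy ▸ .transUp (hn hy) (hr ▸ hyr) (he _ hy ▸ hS) hR ih

structure Invariant (Rp : Set ℕ) (D : DLConcept) (t : SITree) : Prop where
  parent_root : t.parent t.root = t.root
  blabelOrigin : ∀ y ∈ t.nodes, y ≠ t.root → ∃ C, t.BLabelOrigin Rp y C
  justified : ∀ u, ∀ F ∈ t.lab u, t.Justified Rp D u F

theorem Invariant.lab_subset (h : t.Invariant Rp D) (u : ℕ) : t.lab u ⊆ D.subs :=
  fun _ hF => (h.justified u _ hF).mem_subs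

theorem Invariant.init (Rp : Set ℕ) (D : DLConcept) : (initSITree D).Invariant Rp D := by
  refine ⟨rfl, fun y hy hy0 => absurd (Finset.mem_singleton.1 hy) hy0, fun u F hF => ?_⟩
  by_cases hu : u = 0
  · subst hu
    obtain rfl : F = D := by simpa [initSITree] using hF
    exact .root
  · simp [initSITree, hu] at hF

theorem BLabelOrigin.mono (h : t.BLabelOrigin Rp y C) (hp : t'.parent y = t.parent y)
    (he : t'.elb y = t.elb y) (hl : t.lab (t.parent y) ⊆ t'.lab (t.parent y))
    (hb : t.blab y ⊆ t'.blab y)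
    (hnew : ∀ F ∈ t'.blab y, F ∉ t.blab y → t.PushedDown Rp y F) :
    t'.BLabelOrigin Rp y C := by
  have hpush {F} (hF : t.PushedDown Rp y F) : t'.PushedDown Rp y F := by
    simp only [PushedDown, TransAllInto, hp, he] at hF ⊢
    exact hF.imp (fun h => hl h) (fun h => ⟨h.1, hl h.2⟩)
  refine ⟨hb h.1, hp ▸ he ▸ hl h.2.1, fun F hF => ?_⟩
  by_cases hFb : F ∈ t.blab y
  · exact (h.2.2 F hFb).imp_right hpush
  · exact .inr (hpush (hnew F hF hFb))

theorem Invariant.of_shape_eq (h : t.Invariant Rp D) (hn : t'.nodes = t.nodes)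
    (hr : t'.root = t.root) (hp : t'.parent = t.parent) (he : t'.elb = t.elb)
    (hl : ∀ u, t.lab u ⊆ t'.lab u) (hb : ∀ u, t.blab u ⊆ t'.blab u)
    (hjust : ∀ u, ∀ F ∈ t'.lab u, F ∉ t.lab u → t.Justified Rp D u F)
    (hpush : ∀ y, ∀ F ∈ t'.blab y, F ∉ t.blab y → t.PushedDown Rp y F) :
    t'.Invariant Rp D := by
  have lift {u F} (hJ : t.Justified Rp D u F) : t'.Justified Rp D u F :=
    hJ.mono hn.ge hr (fun w _ => by rw [hp]) (fun w _ => by rw [he])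
  refine ⟨by rw [hp, hr]; exact h.parent_root, fun y hy hyr => ?_, fun u F hF => ?_⟩
  · obtain ⟨C, hC⟩ := h.blabelOrigin y (hn ▸ hy) (hr ▸ hyr)
    exact ⟨C, hC.mono (by rw [hp]) (by rw [he]) (hl _) (hb y) (hpush y)⟩
  · by_cases hFu : F ∈ t.lab u
    · exact lift (h.justified u F hFu)
    · exact lift (hjust u F hF hFu)

theorem Invariant.of_lab_subset (h : t.Invariant Rp D) (hn : t'.nodes = t.nodes)
    (hr : t'.root = t.root) (hp : t'.parent = t.parent) (he : t'.elb = t.elb)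
    (hb : t'.blab = t.blab) (hl : ∀ u, t.lab u ⊆ t'.lab u)
    (hjust : ∀ u, ∀ F ∈ t'.lab u, F ∉ t.lab u → t.Justified Rp D u F) :
    t'.Invariant Rp D :=
  h.of_shape_eq hn hr hp he hl (fun _ => hb ▸ subset_rfl) hjust
    (fun _ _ hF hFb => absurd (hb ▸ hF) hFb)

theorem Invariant.of_exists_step (h : t.Invariant Rp D) (hx : x ∈ t.nodes)
    (hC : .ex S C ∈ t.lab x) (hy : y ∉ t.nodes) (hn : t'.nodes = insert y t.nodes)
    (hr : t'.root = t.root) (hp : t'.parent = Function.update t.parent y x)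
    (hl : t'.lab = Function.update t.lab y {C}) (hb : t'.blab = Function.update t.blab y {C})
    (he : t'.elb = Function.update t.elb y S) : t'.Invariant Rp D := by
  have hne {w} (hw : w ∈ t.nodes) : w ≠ y := fun h => hy (h ▸ hw)
  have hyr : y ≠ t.root := (hne t.root_mem).symm
  have hxy : x ≠ y := hne hx
  have lift {u F} (hJ : t.Justified Rp D u F) : t'.Justified Rp D u F :=
    hJ.mono (hn ▸ Finset.subset_insert y t.nodes) hr
      (fun w hw => by rw [hp, Function.update_of_ne (hne hw)])
      (fun w hw => by rw [he, Function.update_of_ne (hne hw)])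
  refine ⟨by rw [hp, hr, Function.update_of_ne hyr.symm]; exact h.parent_root,
    fun w hw hwr => ?_, fun u F hF => ?_⟩
  · rcases Finset.mem_insert.1 (hn ▸ hw) with rfl | hw
    · refine ⟨C, ?_, ?_, fun F hF => .inl ?_⟩
      · simp [hb]
      · simpa [hp, he, hl, hxy] using hC
      · simpa [hb] using hF
    · have hwr : w ≠ t.root := hr ▸ hwr
      have hpw : t.parent w ≠ y := hne (t.parent_mem w hw hwr)
      obtain ⟨C', hC'⟩ := h.blabelOrigin w hw hwr
      refine ⟨C', hC'.mono ?_ ?_ ?_ ?_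
        fun F hF hFb => absurd (by simpa [hb, hne hw] using hF) hFb⟩ <;>
        simp [hp, he, hl, hb, hne hw, hpw]
  · rcases eq_or_ne u y with rfl | hu
    · obtain rfl : F = C := by simpa [hl] using hF
      refine .created (hn ▸ Finset.mem_insert_self u t.nodes) (hr ▸ hyr) ?_
      simpa [hp, he] using lift (h.justified x _ hC)
    · rw [hl, Function.update_of_ne hu] at hF
      exact lift (h.justified u F hF)

theorem _root_.SIStep.invariant (hs : SIStep Rp t t') (h : t.Invariant Rp D) :
    t'.Invariant Rp D := by
  cases hs with
  | conj x C₁ C₂ hx hC _ hn hr hp hl hb he =>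
    refine h.of_lab_subset hn hr hp he hb
      (hl ▸ Finset.subset_update_apply Finset.subset_union_left) fun u F hF hFu => ?_
    obtain ⟨rfl, hF⟩ := Finset.mem_of_mem_update_apply (hl ▸ hF) hFu
    rcases Finset.mem_insert.1 ((Finset.mem_union.1 hF).resolve_left hFu) with rfl | hF
    · exact .andl (h.justified u _ hC)
    · exact Finset.mem_singleton.1 hF ▸ .andr (h.justified u _ hC)
  | disj x C₁ C₂ E hx hC _ hE hn hr hp hl hb he =>
    refine h.of_lab_subset hn hr hp he hb
      (hl ▸ Finset.subset_update_apply (Finset.subset_insert _ _)) fun u F hF hFu => ?_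
    obtain ⟨rfl, rfl⟩ := Finset.eq_of_mem_update_insert (hl ▸ hF) hFu
    rcases hE with rfl | rfl
    · exact .orl (h.justified u _ hC)
    · exact .orr (h.justified u _ hC)
  | allSucc x y S C hx hC hy _ hn hr hp hl hb he =>
    obtain ⟨⟨hy, hyr, rfl⟩, rfl⟩ := hy
    refine h.of_shape_eq hn hr hp he (hl ▸ Finset.subset_update_apply (Finset.subset_insert _ _))
      (hb ▸ Finset.subset_update_apply (Finset.subset_insert _ _)) (fun u F hF hFu => ?_)
      (fun u F hF hFb => ?_)
    · obtain ⟨rfl, rfl⟩ := Finset.eq_of_mem_update_insert (hl ▸ hF) hFu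
      exact .allDown hy hyr (h.justified _ _ hC)
    · obtain ⟨rfl, rfl⟩ := Finset.eq_of_mem_update_insert (hb ▸ hF) hFb
      exact .inl hC
  | allPred x y S C hx hC hy _ hn hr hp hl hb he =>
    obtain ⟨⟨hx, hxr, rfl⟩, hS⟩ := hy
    refine h.of_lab_subset hn hr hp he hb
      (hl ▸ Finset.subset_update_apply (Finset.subset_insert _ _)) fun u F hF hFu => ?_
    obtain ⟨rfl, rfl⟩ := Finset.eq_of_mem_update_insert (hl ▸ hF) hFu
    exact .allUp hx hxr hS (h.justified _ _ hC)
  | allTransSucc x y S C hx hC hS hy _ hn hr hp hl hb he =>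
    obtain ⟨⟨hy, hyr, rfl⟩, rfl⟩ := hy
    refine h.of_shape_eq hn hr hp he (hl ▸ Finset.subset_update_apply (Finset.subset_insert _ _))
      (hb ▸ Finset.subset_update_apply (Finset.subset_insert _ _)) (fun u F hF hFu => ?_)
      (fun u F hF hFb => ?_)
    · obtain ⟨rfl, rfl⟩ := Finset.eq_of_mem_update_insert (hl ▸ hF) hFu
      exact .transDown hy hyr ⟨hS, C, rfl⟩ (h.justified _ _ hC)
    · obtain ⟨rfl, rfl⟩ := Finset.eq_of_mem_update_insert (hb ▸ hF) hFb
      exact .inr ⟨⟨hS, C, rfl⟩, hC⟩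
  | allTransPred x y S C hx hC hS hy _ hn hr hp hl hb he =>
    obtain ⟨⟨hx, hxr, rfl⟩, hS'⟩ := hy
    refine h.of_lab_subset hn hr hp he hb
      (hl ▸ Finset.subset_update_apply (Finset.subset_insert _ _)) fun u F hF hFu => ?_
    obtain ⟨rfl, rfl⟩ := Finset.eq_of_mem_update_insert (hl ▸ hF) hFu
    exact .transUp hx hxr hS' hS (h.justified _ _ hC)
  | exists_ x y S C hx hC _ _ _ hy hn hr hp hl hb he =>
    exact h.of_exists_step hx hC hy hn hr hp hl hb he

theorem mem_lab_of_not_allApp (hz : ¬ t.AllApp z) (hC : .all S C ∈ t.lab z)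
    (hy : t.SSucc S z y) : C ∈ t.lab y := by
  by_contra hCy
  exact hz ⟨S, C, hC, .inl ⟨y, hy, fun h => hCy (t.blab_sub y h)⟩⟩

theorem all_mem_lab_succ_of_not_allTransApp (hz : ¬ t.AllTransApp Rp z)
    (hC : .all S C ∈ t.lab z) (hS : RTrans Rp S) (hy : t.SSucc S z y) : .all S C ∈ t.lab y := by
  by_contra hCy
  exact hz ⟨S, C, hC, hS, .inl ⟨y, hy, fun h => hCy (t.blab_sub y h)⟩⟩

theorem all_mem_lab_pred_of_not_allTransApp (hz : ¬ t.AllTransApp Rp z)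
    (hC : .all S C ∈ t.lab z) (hS : RTrans Rp S) (hy : t.SPred S z y) : .all S C ∈ t.lab y := by
  by_contra hCy
  exact hz ⟨S, C, hC, hS, .inr ⟨y, hy, hCy⟩⟩

theorem AncestorsSaturated.not_allApp (h : t.AncestorsSaturated Rp x) (hx : x ∈ t.nodes)
    {k : ℕ} (hk : k < t.depth x) : ¬ t.AllApp (t.pathNode x k) :=
  fun h' => h _ (anc_of_lt_depth hx hk) (.inr (.inr (.inl h')))

theorem AncestorsSaturated.not_allTransApp (h : t.AncestorsSaturated Rp x) (hx : x ∈ t.nodes)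
    {k : ℕ} (hk : k < t.depth x) : ¬ t.AllTransApp Rp (t.pathNode x k) :=
  fun h' => h _ (anc_of_lt_depth hx hk) (.inr (.inr (.inr h')))

/-- Bookkeeping for a walk through the tree that follows a justification from `(root, D)` to
`(u, F)`: the walk has crossed the edges into `pathNode x (k + 1)` for exactly the `k < j`, the
first time carrying the concept `c k`. -/
structure WalkTags (Rp : Set ℕ) (D : DLConcept) (t : SITree) (x u : ℕ) (F : DLConcept) (j : ℕ)
    (c : ℕ → DLConcept) : Prop where
  crossed : ∀ k < t.depth x, t.AncOrSelf (t.pathNode x (k + 1)) u → k < j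
  mem : ∀ k < j, c k ∈ D.subs
  desc : IsDescending DLConcept.size (fun k => t.TransAllInto Rp (t.pathNode x (k + 1)) (c k)) c j
  cur : ∀ k < j,
    F.size < (c k).size ∨ (F = c k ∧ t.TransAllInto Rp (t.pathNode x (k + 1)) (c k))

theorem WalkTags.root (hr : t.parent t.root = t.root) (c : ℕ → DLConcept) :
    t.WalkTags Rp D x t.root D 0 c where
  crossed k hk h := absurd (h.eq_root hr) (pathNode_ne_root (by omega) hk)
  mem _ h := absurd h (Nat.not_lt_zero _)
  desc _ _ _ h := absurd h (Nat.not_lt_zero _)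
  cur _ h := absurd h (Nat.not_lt_zero _)

theorem WalkTags.of_size_le (h : t.WalkTags Rp D x u F j c) (hF : F' = F ∨ F'.size < F.size) :
    t.WalkTags Rp D x u F' j c := by
  refine ⟨h.crossed, h.mem, h.desc, fun k hk => ?_⟩
  rcases hF with rfl | hF
  · exact h.cur k hk
  · rcases h.cur k hk with h' | ⟨rfl, -⟩ <;> omega

theorem WalkTags.parent (h : t.WalkTags Rp D x u F j c) : t.WalkTags Rp D x (t.parent u) F j c :=
  ⟨fun k hk hu => h.crossed k hk hu.of_parent, h.mem, h.desc, h.cur⟩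

/-- If `y` is the first path node not yet reached, the edge into `y` gets tagged with `F`. -/
theorem WalkTags.child (hx : x ∈ t.nodes) (h : t.WalkTags Rp D x u F j c) (hyr : y ≠ t.root)
    (hyu : t.parent y = u) (hF : F ∈ D.subs)
    (hF' : (F' = F ∧ t.TransAllInto Rp y F) ∨ F'.size < F.size) :
    ∃ j c, t.WalkTags Rp D x y F' j c := by
  have hle : ∀ k < t.depth x, t.pathNode x (k + 1) = y → k ≤ j := by
    rintro (_ | k) hk rfl
    · omega
    · have := h.crossed k (by omega) (hyu ▸ parent_pathNode hk ▸ ⟨0, rfl⟩)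
      omega
  by_cases hnew : j < t.depth x ∧ t.pathNode x (j + 1) = y
  · obtain ⟨hj, rfl⟩ := hnew
    refine ⟨j + 1, Function.update c j F,
      ⟨fun k hk hky => ?_, fun k hk => ?_, ?_, fun k hk => ?_⟩⟩
    · rcases hky.eq_or_of_parent with hky | hky
      · have := pathNode_inj hx (by omega) (by omega) hky; omega
      · have := h.crossed k hk (hyu ▸ hky); omega
    · rcases (Nat.lt_succ_iff.1 hk).eq_or_lt with rfl | hk
      · simpa using hF
      · simpa [hk.ne] using h.mem k hk
    · intro k k' hkk' hk'
      rcases (Nat.lt_succ_iff.1 hk').eq_or_lt with rfl | hk'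
      · simpa [hkk'.ne] using h.cur k hkk'
      · simpa [hkk'.ne, hk'.ne, (hkk'.trans hk').ne] using h.desc k k' hkk' hk'
    · rcases (Nat.lt_succ_iff.1 hk).eq_or_lt with rfl | hk
      · simp only [Function.update_self]
        exact hF'.symm.imp_right id
      · simp only [Function.update_of_ne hk.ne]
        exact (h.of_size_le (hF'.imp_left And.left)).cur k hk
  · refine ⟨j, c, fun k hk hky => ?_, h.mem, h.desc,
      (h.of_size_le (hF'.imp_left And.left)).cur⟩
    rcases hky.eq_or_of_parent with hky | hky
    · rcases (hle k hk hky).eq_or_lt with rfl | hkj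
      · exact absurd ⟨hk, hky⟩ hnew
      · exact hkj
    · exact h.crossed k hk (hyu ▸ hky)

theorem Justified.exists_walkTags (hx : x ∈ t.nodes) (hr : t.parent t.root = t.root)
    (h : t.Justified Rp D u F) : ∃ j c, t.WalkTags Rp D x u F j c := by
  induction h with
  | root => exact ⟨0, fun _ => D, .root hr _⟩
  | andl _ ih | andr _ ih | orl _ ih | orr _ ih =>
    obtain ⟨j, c, hw⟩ := ih
    exact ⟨j, c, hw.of_size_le (.inr (DLConcept.size_lt_of_directSub (by constructor)))⟩
  | created _ hyr hJ ih | allDown _ hyr hJ ih =>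
    obtain ⟨j, c, hw⟩ := ih
    exact hw.child hx hyr rfl hJ.mem_subs (.inr (DLConcept.size_lt_of_directSub (by constructor)))
  | allUp _ _ _ _ ih =>
    obtain ⟨j, c, hw⟩ := ih
    exact ⟨j, c, hw.parent.of_size_le (.inr (DLConcept.size_lt_of_directSub (by constructor)))⟩
  | transDown _ hyr hF hJ ih =>
    obtain ⟨j, c, hw⟩ := ih
    exact hw.child hx hyr rfl hJ.mem_subs (.inl ⟨rfl, hF⟩)
  | transUp _ _ _ _ _ ih =>
    obtain ⟨j, c, hw⟩ := ih
    exact ⟨j, c, hw.parent⟩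

theorem Invariant.exists_isDescending (hI : t.Invariant Rp D) (hx : x ∈ t.nodes)
    (hF : F ∈ t.lab x) :
    ∃ c : ℕ → DLConcept, (∀ k < t.depth x, c k ∈ D.subs) ∧
      IsDescending DLConcept.size (fun k => t.TransAllInto Rp (t.pathNode x (k + 1)) (c k)) c
        (t.depth x) := by
  obtain ⟨j, c, hw⟩ := (hI.justified x F hF).exists_walkTags hx hI.parent_root
  have hcross : ∀ k < t.depth x, k < j := fun k hk =>
    hw.crossed k hk (by simpa using ancOrSelf_pathNode (x := x) (Nat.succ_le_of_lt hk) le_rfl)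
  refine ⟨c, fun k hk => hw.mem k (hcross k hk), hw.desc.mono ?_⟩
  rcases Nat.eq_zero_or_pos (t.depth x) with h0 | h0
  · omega
  · have := hcross _ (Nat.sub_lt h0 one_pos); omega

/-- The blocking witness is `pathNode x (k + 1)`. -/
theorem blocked_of_run (hx : x ∈ t.nodes) (hsat : t.AncestorsSaturated Rp x) (hR : RTrans Rp R)
    {k k' : ℕ} (hkk' : k < k') (hk' : k' < t.depth x) (hkR : t.elb (t.pathNode x (k + 1)) = R)
    (hk'R : t.elb (t.pathNode x (k' + 1)) = R)
    (hC : t.BLabelOrigin Rp (t.pathNode x (k + 1)) C)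
    (hC' : t.BLabelOrigin Rp (t.pathNode x (k' + 1)) C)
    (hW : ofForm (all R) (t.lab (t.pathNode x k')) ⊆ ofForm (all R) (t.lab (t.pathNode x k)))
    (hP : ofForm (all R.Inv) (t.lab (t.pathNode x (k + 1))) =
      ofForm (all R.Inv) (t.lab (t.pathNode x (k' + 1)))) :
    t.Blocked x := by
  have hk : k < t.depth x := hkk'.trans hk'
  have hedge := sSucc_pathNode hx hk
  rw [hkR] at hedge
  have hall {E} (hE : all R E ∈ t.lab (t.pathNode x k')) : all R E ∈ t.lab (t.pathNode x k) :=
    (mem_ofForm.1 (hW (mem_ofForm.2 ⟨hE, E, rfl⟩))).1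
  refine ⟨t.pathNode x (k' + 1), ?_, pathNode_mem hx hk', pathNode_ne_root (by omega) hk',
    t.pathNode x (k + 1), anc_pathNode hx (by omega) hk', fun F hF => ?_, ?_⟩
  · rcases Nat.lt_or_eq_of_le (Nat.succ_le_of_lt hk') with hlt | heq
    · exact .inr (anc_of_lt_depth hx hlt)
    · exact .inl (by rw [← Nat.succ_eq_add_one, heq, pathNode_depth])
  · have hup : t.parent (t.pathNode x (k' + 1)) = t.pathNode x k' := parent_pathNode hk'
    rw [Finset.mem_coe] at hF ⊢
    rcases hC'.2.2 F hF with rfl | hF | ⟨⟨-, E, rfl⟩, hF⟩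
    · exact t.blab_sub _ hC.1
    · rw [hk'R, hup] at hF
      exact mem_lab_of_not_allApp (hsat.not_allApp hx hk) (hall hF) hedge
    · rw [hup, hk'R] at hF
      rw [hk'R]
      exact all_mem_lab_succ_of_not_allTransApp (hsat.not_allTransApp hx hk) (hall hF) hR hedge
  · ext F
    have := congrArg (F ∈ ·) hP
    simp only [mem_ofForm, eq_iff_iff] at this
    simp only [Set.mem_ofPred_eq, hk'R, eq_comm (a := F)]
    exact this.symm

theorem monotoneOn_ofForm_all_of_run (hx : x ∈ t.nodes) (hsat : t.AncestorsSaturated Rp x)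
    (hR : RTrans Rp R) (hK : (K : Set ℕ).OrdConnected)
    (hKR : ∀ k ∈ K, k < t.depth x ∧ t.elb (t.pathNode x (k + 1)) = R) :
    MonotoneOn (fun k => ofForm (all R) (t.lab (t.pathNode x k))) K :=
  monotoneOn_of_le_succ hK fun a _ ha _ F hF => by
    obtain ⟨hF, E, rfl⟩ := mem_ofForm.1 hF
    obtain ⟨ha, haR⟩ := hKR a ha
    have hedge := sSucc_pathNode hx ha
    rw [haR] at hedge
    exact mem_ofForm.2 ⟨all_mem_lab_succ_of_not_allTransApp
      (hsat.not_allTransApp hx ha) hF hR hedge, E, rfl⟩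

theorem antitoneOn_ofForm_all_inv_of_run (hx : x ∈ t.nodes) (hsat : t.AncestorsSaturated Rp x)
    (hR : RTrans Rp R) (hK : (K : Set ℕ).OrdConnected)
    (hKR : ∀ k ∈ K, k + 1 < t.depth x ∧ t.elb (t.pathNode x (k + 1)) = R) :
    AntitoneOn (fun k => ofForm (all R.Inv) (t.lab (t.pathNode x (k + 1)))) K :=
  antitoneOn_of_succ_le hK fun a _ _ ha' F hF => by
    obtain ⟨hF, E, rfl⟩ := mem_ofForm.1 hF
    obtain ⟨ha', ha'R⟩ := hKR _ ha'
    rw [Order.succ_eq_add_one] at ha' ha'R hF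
    have hedge := sPred_pathNode hx (k := a + 1) (by omega)
    rw [ha'R] at hedge
    exact mem_ofForm.2 ⟨all_mem_lab_pred_of_not_allTransApp
      (hsat.not_allTransApp hx ha') hF hR.inv hedge, E, rfl⟩

/-- `k ↦ (∃R.C_k, |L(p_k)/R|, |L(p_(k+1))/R⁻|)` is injective on a run: the two parts are
monotone along it, and a repetition would block `x`. -/
theorem card_run_le (hI : t.Invariant Rp D) (hx : x ∈ t.nodes) (hsat : t.AncestorsSaturated Rp x)
    (hnb : ¬ t.Blocked x) (hR : RTrans Rp R) (hK : (K : Set ℕ).OrdConnected)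
    (hKR : ∀ k ∈ K, k + 1 < t.depth x ∧ t.elb (t.pathNode x (k + 1)) = R) :
    K.card ≤ (ofForm (ex R) D.subs).card * ((ofForm (all R) D.subs).card + 1) *
      ((ofForm (all R.Inv) D.subs).card + 1) := by
  have hC : ∀ k ∈ K, ∃ C, t.BLabelOrigin Rp (t.pathNode x (k + 1)) C := fun k hk =>
    hI.blabelOrigin _ (pathNode_mem hx (hKR k hk).1.le)
      (pathNode_ne_root (by omega) (hKR k hk).1.le)
  have : Nonempty DLConcept := ⟨.top⟩
  choose! C hC using hC
  set W := fun k => ofForm (all R) (t.lab (t.pathNode x k))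
  set P := fun k => ofForm (all R.Inv) (t.lab (t.pathNode x (k + 1)))
  have hW : MonotoneOn W K := monotoneOn_ofForm_all_of_run hx hsat hR hK fun k hk =>
    ⟨by have := (hKR k hk).1; omega, (hKR k hk).2⟩
  have hP : AntitoneOn P K := antitoneOn_ofForm_all_inv_of_run hx hsat hR hK hKR
  have hsep : ∀ k ∈ K, ∀ k' ∈ K, k < k' →
      (ex R (C k), (W k).card, (P k).card) ≠ (ex R (C k'), (W k').card, (P k').card) := by
    intro k hk k' hk' hkk' heq
    simp only [Prod.mk.injEq, ex.injEq, true_and] at heq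
    obtain ⟨hCeq, hWcard, hPcard⟩ := heq
    have hk'R := hKR k' hk'
    refine hnb (blocked_of_run hx hsat hR hkk' (by omega) (hKR k hk).2 hk'R.2 (hC k hk)
      (hCeq ▸ hC k' hk') ?_ ?_)
    · exact (Finset.eq_of_subset_of_card_le (hW hk hk' hkk'.le) hWcard.ge).ge
    · exact (Finset.eq_of_subset_of_card_le (hP hk hk' hkk'.le) hPcard.le).symm
  calc K.card
      ≤ (ofForm (ex R) D.subs ×ˢ (Finset.range ((ofForm (all R) D.subs).card + 1) ×ˢ
          Finset.range ((ofForm (all R.Inv) D.subs).card + 1))).card := by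
        refine Finset.card_le_card_of_injOn (fun k => (ex R (C k), (W k).card, (P k).card))
          (fun k hk => ?_) (fun k hk k' hk' heq => ?_)
        · obtain ⟨hkn, hkR⟩ := hKR k hk
          have hex := (hC k hk).2.1
          rw [parent_pathNode (by omega), hkR] at hex
          simp only [Finset.coe_product, Set.mem_prod, Finset.mem_coe, Finset.mem_range,
            Nat.lt_succ_iff]
          exact ⟨mem_ofForm.2 ⟨hI.lab_subset _ hex, _, rfl⟩,
            Finset.card_le_card (ofForm_subset_ofForm (hI.lab_subset _)),
            Finset.card_le_card (ofForm_subset_ofForm (hI.lab_subset _))⟩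
        · rcases lt_trichotomy k k' with hlt | rfl | hlt
          · exact absurd heq (hsep k hk k' hk' hlt)
          · rfl
          · exact absurd heq.symm (hsep k' hk' k hk hlt)
    _ = _ := by simp only [Finset.card_product, Finset.card_range, mul_assoc]

theorem mul_card_run_le (hI : t.Invariant Rp D) (hx : x ∈ t.nodes)
    (hsat : t.AncestorsSaturated Rp x) (hnb : ¬ t.Blocked x) (hR : RTrans Rp R)
    (hK : (K : Set ℕ).OrdConnected)
    (hKR : ∀ k ∈ K, k < t.depth x ∧ t.elb (t.pathNode x (k + 1)) = R) :
    27 * K.card ≤ (D.subs.card + 2) ^ 3 + 27 := by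
  set K' := K.filter (· + 1 < t.depth x)
  have hK' : (K' : Set ℕ).OrdConnected := ⟨fun k hk k' hk' i hi => by
    simp only [K', Finset.coe_filter, Set.mem_ofPred_eq] at hk hk' ⊢
    exact ⟨hK.out hk.1 hk'.1 hi, by have := hi.2; omega⟩⟩
  have hlast : (K.filter (¬ · + 1 < t.depth x)).card ≤ 1 :=
    Finset.card_le_one.2 fun k hk k' hk' => by
      simp only [Finset.mem_filter] at hk hk'
      have := (hKR k hk.1).1; have := (hKR k' hk'.1).1; omega
  have hcard := card_run_le hI hx hsat hnb hR hK' fun k hk =>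
    ⟨(Finset.mem_filter.1 hk).2, (hKR k (Finset.mem_filter.1 hk).1).2⟩
  have hsum := card_ofForm_ex_add_all_add_all_inv_le R D.subs
  have hamgm := mul_mul_le_add_add_pow_three (ofForm (ex R) D.subs).card
    ((ofForm (all R) D.subs).card + 1) ((ofForm (all R.Inv) D.subs).card + 1)
  have hpow : ((ofForm (ex R) D.subs).card + ((ofForm (all R) D.subs).card + 1) +
      ((ofForm (all R.Inv) D.subs).card + 1)) ^ 3 ≤ (D.subs.card + 2) ^ 3 :=
    Nat.pow_le_pow_left (by omega) 3
  have hsplit : K'.card + (K.filter (¬ · + 1 < t.depth x)).card = K.card :=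
    Finset.card_filter_add_card_filter_not _
  omega

theorem Invariant.depth_succ_le (hI : t.Invariant Rp D) (hx : x ∈ t.nodes)
    (hC : .ex S C ∈ t.lab x) (hnb : ¬ t.Blocked x) (hsat : t.AncestorsSaturated Rp x) :
    t.depth x + 1 ≤ D.subs.card ^ 4 := by
  obtain ⟨c, hmem, hdesc⟩ := hI.exists_isDescending hx hC
  refine succ_le_pow_four (two_le_card_subs (hI.lab_subset x hC)) (hdesc.mul_le hmem ?_)
  intro a _ K hK hKa
  rcases K.eq_empty_or_nonempty with rfl | ⟨k₀, hk₀⟩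
  · simp
  obtain ⟨-, ⟨hR, E, hE⟩, rfl⟩ := hKa k₀ hk₀
  refine mul_card_run_le hI hx hsat hnb hR hK fun k hk => ⟨(hKa k hk).1, ?_⟩
  obtain ⟨-, ⟨-, E', hE'⟩, hc⟩ := hKa k hk
  rw [hc, hE] at hE'
  exact (all.inj hE').1.symm

theorem iterate_update_parent (hr : t.parent t.root = t.root) (hy : y ∉ t.nodes)
    (hz : z ∈ t.nodes) (k : ℕ) : (Function.update t.parent y x)^[k] z = t.parent^[k] z := by
  induction k generalizing z with
  | zero => rfl
  | succ k ih =>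
    rw [Function.iterate_succ_apply, Function.iterate_succ_apply,
      Function.update_of_ne (fun h : z = y => hy (h ▸ hz)), ih (mapsTo_parent hr hz)]

theorem depth_le_of_shape_eq (hn : t'.nodes = t.nodes) (hr : t'.root = t.root)
    (hp : t'.parent = t.parent) (hdepth : ∀ z ∈ t.nodes, t.depth z ≤ N) :
    ∀ z ∈ t'.nodes, t'.depth z ≤ N :=
  fun z hz => depth_congr hp hr z ▸ hdepth z (hn ▸ hz)

theorem depth_le_of_new_node (hr : t.parent t.root = t.root) (hx : x ∈ t.nodes)
    (hy : y ∉ t.nodes) (hn : t'.nodes = insert y t.nodes) (hr' : t'.root = t.root)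
    (hp : t'.parent = Function.update t.parent y x) (hdepth : ∀ z ∈ t.nodes, t.depth z ≤ N)
    (hxN : t.depth x + 1 ≤ N) : ∀ z ∈ t'.nodes, t'.depth z ≤ N := by
  intro z hz
  rcases Finset.mem_insert.1 (hn ▸ hz) with rfl | hz
  · refine le_trans (Nat.sInf_le (show _ = _ from ?_)) hxN
    rw [Function.iterate_succ_apply, hp, Function.update_self, iterate_update_parent hr hy hx,
      iterate_depth hx, hr']
  · exact (depth_le_of_iterate_eq hr' hz (by rw [hp, iterate_update_parent hr hy hz])).trans
      (hdepth z hz)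

theorem _root_.SIStep.depth_le (hs : SIStep Rp t t') (hI : t.Invariant Rp D)
    (hdepth : ∀ z ∈ t.nodes, t.depth z ≤ D.subs.card ^ 4) :
    ∀ z ∈ t'.nodes, t'.depth z ≤ D.subs.card ^ 4 := by
  cases hs with
  | conj _ _ _ _ _ _ hn hr hp | disj _ _ _ _ _ _ _ _ hn hr hp
  | allSucc _ _ _ _ _ _ _ _ hn hr hp | allPred _ _ _ _ _ _ _ _ hn hr hp
  | allTransSucc _ _ _ _ _ _ _ _ _ hn hr hp | allTransPred _ _ _ _ _ _ _ _ _ hn hr hp =>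
    exact depth_le_of_shape_eq hn hr hp hdepth
  | exists_ x y S C hx hC hnb hsat _ hy hn hr hp =>
    exact depth_le_of_new_node hI.parent_root hx hy hn hr hp hdepth
      (hI.depth_succ_le hx hC hnb hsat)

end SITree

theorem si_path_bound_general (Rp : Set ℕ) (D : DLConcept) :
    ∀ t : SITree, Relation.ReflTransGen (SIStep Rp) (initSITree D) t →
      ∀ x ∈ t.nodes,
        t.depth x ≤ {C | Relation.ReflTransGen DirectSub C D}.ncard ^ 4 := by
  intro t ht
  rw [DLConcept.ncard_setOf_reflTransGen]
  suffices t.Invariant Rp D ∧ ∀ x ∈ t.nodes, t.depth x ≤ D.subs.card ^ 4 from this.2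
  induction ht with
  | refl =>
    refine ⟨.init Rp D, fun x hx => ?_⟩
    obtain rfl : x = 0 := Finset.mem_singleton.1 hx
    rw [show (initSITree D).depth 0 = 0 from Nat.sInf_eq_zero.2 (.inl rfl)]
    exact Nat.zero_le _
  | tail _ hs ih => exact ⟨hs.invariant ih.1, hs.depth_le ih.1 ih.2⟩

/-- **Lemma 5: polynomial path bound for SI.** With
`m = |sub(D)|`, every path in a completion tree generated by the SI tableaux
algorithm for an SI-concept `D` in NNF has length at most `m⁴`. -/
theorem si_path_bound (Rp : Set ℕ) (D : DLConcept)
    (hNNF : D.IsNNF) (hSI : D.IsSI) :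
    ∀ t : SITree, Relation.ReflTransGen (SIStep Rp) (initSITree D) t →
      ∀ x ∈ t.nodes,
        t.depth x ≤ {C | Relation.ReflTransGen DirectSub C D}.ncard ^ 4 :=
  si_path_bound_general Rp D
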